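/- Let u, v, w be nonnegative forms on a complex vector space X, and let p be a nonnegative form with p[x] = sup_{n∈ℕ} inf_{y∈X} (v[x−y] + n·w[y]) for all x ∈ X (i.e. p = D_w v). Then inf_{y∈X} (v[x−y] + w[y]) ≤ inf_{y∈X} (u[x−y] + w[y]) holds for all x ∈ X (i.e. v : w ≤ u : w for the parallel sums) if and only if p ≤ u. (This is the adjunction property of the antitone Galois connection induced by parallel addition and parallel subtraction.) -/

import Mathlib

open scoped ComplexOrder

/-- A sesquilinear form (linear in the first, conjugate-linear in the second variable)
`t : X →ₗ[ℂ] X →ₗ⋆[ℂ] ℂ` is nonnegative if `t(x,x) ≥ 0` for all `x`. -/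
def IsNNForm {X : Type*} [AddCommGroup X] [Module ℂ X]
    (t : X →ₗ[ℂ] X →ₗ⋆[ℂ] ℂ) : Prop :=
  ∀ x : X, 0 ≤ t x x

/-- The quadratic form of a form: `t[x] = t(x,x)`, viewed as a real number. -/
def FQ {X : Type*} [AddCommGroup X] [Module ℂ X]
    (t : X →ₗ[ℂ] X →ₗ⋆[ℂ] ℂ) (x : X) : ℝ :=
  (t x x).re

/-- The order on forms: `t ≤ w` iff `t[x] ≤ w[x]` for all `x`. -/
def FLe {X : Type*} [AddCommGroup X] [Module ℂ X]
    (t w : X →ₗ[ℂ] X →ₗ⋆[ℂ] ℂ) : Prop :=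
  ∀ x : X, FQ t x ≤ FQ w x

/-- `t` and `w` are singular: the only nonnegative form below both is the zero form. -/
def SingForm {X : Type*} [AddCommGroup X] [Module ℂ X]
    (t w : X →ₗ[ℂ] X →ₗ⋆[ℂ] ℂ) : Prop :=
  ∀ s : X →ₗ[ℂ] X →ₗ⋆[ℂ] ℂ, IsNNForm s → FLe s t → FLe s w → s = 0


/-!
Write `t : w` for `parallelSum t w`. The inequality `v : w ≤ u : w` is equivalent to
`(v : w)[a + b] ≤ u[a] + w[b]` for all `a, b`. If this holds for `w`, it holds for `2 • w`:
two near-minimisers for `w` average to one for `2 • w`, by midpoint convexity of `v[·]` and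
`w[2y] = 4 w[y]`. Hence `v : (2ᵏ • w) ≤ u` for all `k`, and so `D_w v ≤ u`. Conversely,
`w[b + z] ≤ (1 + μ) w[b] + (1 + μ⁻¹) w[z]` gives `(v : w)[a + b] ≤ (v : n • w)[a] + (1 + μ) w[b]`
for `n ≥ 1 + μ⁻¹`, which is at most `u[a] + (1 + μ) w[b]`; let `μ → 0`.
-/

section
variable {X : Type*} [AddCommGroup X] [Module ℂ X] {t : X →ₗ[ℂ] X →ₗ⋆[ℂ] ℂ}

lemma FQ_nonneg (ht : IsNNForm t) (x : X) : 0 ≤ FQ t x :=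
  (Complex.nonneg_iff.1 (ht x)).1

@[simp]
lemma FQ_zero (t : X →ₗ[ℂ] X →ₗ⋆[ℂ] ℂ) : FQ t 0 = 0 := by
  simp [FQ]

lemma FQ_smul (t : X →ₗ[ℂ] X →ₗ⋆[ℂ] ℂ) (c : ℂ) (x : X) :
    FQ t (c • x) = Complex.normSq c * FQ t x := by
  simp only [FQ, map_smul, LinearMap.map_smulₛₗ, LinearMap.smul_apply, smul_eq_mul]
  rw [mul_left_comm, ← mul_assoc, Complex.mul_conj, Complex.re_ofReal_mul]

lemma FQ_nsmul (t : X →ₗ[ℂ] X →ₗ⋆[ℂ] ℂ) (n : ℕ) (x : X) : FQ (n • t) x = n * FQ t x := by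
  simp [FQ]

lemma IsNNForm.nsmul (ht : IsNNForm t) (n : ℕ) : IsNNForm (n • t) := fun x => by
  simpa [LinearMap.smul_apply] using nsmul_nonneg (ht x) n

lemma FQ_add_smul (t : X →ₗ[ℂ] X →ₗ⋆[ℂ] ℂ) (a b : X) (r : ℝ) :
    FQ t (a + (r : ℂ) • b) = FQ t a + r * (t a b + t b a).re + r ^ 2 * FQ t b := by
  simp only [FQ, map_add, map_smul, LinearMap.map_smulₛₗ, LinearMap.add_apply,
    LinearMap.smul_apply, smul_eq_mul, Complex.conj_ofReal, Complex.add_re, Complex.re_ofReal_mul]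
  ring

lemma FQ_add_le (ht : IsNNForm t) {μ : ℝ} (hμ : 0 < μ) (a b : X) :
    FQ t (a + b) ≤ (1 + μ) * FQ t a + (1 + μ⁻¹) * FQ t b := by
  have hadd := FQ_add_smul t a b 1
  have hsub := FQ_add_smul t b a (-μ)
  have := FQ_nonneg ht (b + ((-μ : ℝ) : ℂ) • a)
  rw [Complex.ofReal_one, one_smul] at hadd
  rw [add_comm (t b a)] at hsub
  have hcross : (t a b + t b a).re ≤ μ * FQ t a + μ⁻¹ * FQ t b := by
    rw [← mul_le_mul_iff_of_pos_left hμ, mul_add, ← mul_assoc, mul_inv_cancel_left₀ hμ.ne']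
    nlinarith
  linarith

lemma FQ_midpoint_le (ht : IsNNForm t) (a b : X) :
    2 * FQ t ((2⁻¹ : ℂ) • (a + b)) ≤ FQ t a + FQ t b := by
  have := FQ_add_le ht one_pos a b
  rw [FQ_smul]
  norm_num at this ⊢
  linarith

noncomputable def parallelSum (t w : X →ₗ[ℂ] X →ₗ⋆[ℂ] ℂ) (x : X) : ℝ :=
  ⨅ y : X, (FQ t (x - y) + FQ w y)

variable {u v w : X →ₗ[ℂ] X →ₗ⋆[ℂ] ℂ}

lemma parallelSum_nsmul (t w : X →ₗ[ℂ] X →ₗ⋆[ℂ] ℂ) (n : ℕ) (x : X) :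
    parallelSum t (n • w) x = ⨅ y : X, (FQ t (x - y) + n * FQ w y) := by
  simp only [parallelSum, FQ_nsmul]

lemma bddBelow_parallelSum (hv : IsNNForm v) (hw : IsNNForm w) (x : X) :
    BddBelow (Set.range fun y => FQ v (x - y) + FQ w y) :=
  ⟨0, by rintro _ ⟨y, rfl⟩; exact add_nonneg (FQ_nonneg hv _) (FQ_nonneg hw _)⟩

lemma parallelSum_le (hv : IsNNForm v) (hw : IsNNForm w) (x y : X) :
    parallelSum v w x ≤ FQ v (x - y) + FQ w y :=
  ciInf_le (bddBelow_parallelSum hv hw x) y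

lemma parallelSum_le_left (hv : IsNNForm v) (hw : IsNNForm w) (x : X) :
    parallelSum v w x ≤ FQ v x := by
  simpa using parallelSum_le hv hw x 0

lemma parallelSum_mono_right {w' : X →ₗ[ℂ] X →ₗ⋆[ℂ] ℂ} (hv : IsNNForm v) (hw : IsNNForm w)
    (h : FLe w w') (x : X) : parallelSum v w x ≤ parallelSum v w' x :=
  ciInf_mono (bddBelow_parallelSum hv hw x) fun y => add_le_add le_rfl (h y)

lemma exists_add_lt_parallelSum_add (x : X) {ε : ℝ} (hε : 0 < ε) :
    ∃ y, FQ v (x - y) + FQ w y < parallelSum v w x + ε :=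
  exists_lt_of_ciInf_lt (lt_add_of_pos_right _ hε)

lemma parallelSum_le_parallelSum_iff (hu : IsNNForm u) (hw : IsNNForm w) :
    (∀ x, parallelSum v w x ≤ parallelSum u w x) ↔
      ∀ a b, parallelSum v w (a + b) ≤ FQ u a + FQ w b := by
  refine ⟨fun h a b => ?_, fun h x => le_ciInf fun y => ?_⟩
  · simpa using (h (a + b)).trans (parallelSum_le hu hw (a + b) b)
  · simpa using h (x - y) y

lemma parallelSum_two_nsmul_add_le (hv : IsNNForm v) (hw : IsNNForm w)
    (h : ∀ a b, parallelSum v w (a + b) ≤ FQ u a + FQ w b) (a b : X) :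
    parallelSum v (2 • w) (a + b) ≤ FQ u a + FQ (2 • w) b := by
  rw [FQ_nsmul]
  refine le_of_forall_pos_le_add fun ε hε => ?_
  have step : ∀ b, ∃ d, FQ v (a - d) + FQ w (b + d) < FQ u a + FQ w b + ε := fun b => by
    obtain ⟨z, hz⟩ := exists_add_lt_parallelSum_add (v := v) (w := w) (a + b) hε
    refine ⟨z - b, ?_⟩
    rw [sub_sub_eq_add_sub, add_sub_cancel]
    linarith [h a b]
  obtain ⟨d₁, h₁⟩ := step ((2 : ℂ) • b)
  obtain ⟨d₂, h₂⟩ := step ((2 : ℂ) • b + d₁)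
  set d := (2⁻¹ : ℂ) • (d₁ + d₂)
  have hconv : 2 * FQ v (a - d) ≤ FQ v (a - d₁) + FQ v (a - d₂) := by
    have : a - d = (2⁻¹ : ℂ) • ((a - d₁) + (a - d₂)) := by module
    rw [this]; exact FQ_midpoint_le hv _ _
  have hsum : (2 : ℂ) • b + d₁ + d₂ = (2 : ℂ) • (b + d) := by module
  have h4 : Complex.normSq 2 = 4 := by norm_num
  rw [hsum, FQ_smul, h4] at h₂
  rw [FQ_smul, h4] at h₁
  calc parallelSum v (2 • w) (a + b) ≤ FQ v (a + b - (b + d)) + FQ (2 • w) (b + d) :=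
        parallelSum_le hv (hw.nsmul 2) _ _
    _ = FQ v (a - d) + 2 * FQ w (b + d) := by
          rw [show a + b - (b + d) = a - d by abel, FQ_nsmul]; norm_num
    _ ≤ FQ u a + (2 : ℕ) * FQ w b + ε := by push_cast; linarith

lemma parallelSum_two_pow_nsmul_add_le (hv : IsNNForm v) (hw : IsNNForm w)
    (h : ∀ a b, parallelSum v w (a + b) ≤ FQ u a + FQ w b) (k : ℕ) (a b : X) :
    parallelSum v (2 ^ k • w) (a + b) ≤ FQ u a + FQ (2 ^ k • w) b := by
  induction k generalizing a b with
  | zero => simpa using h a b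
  | succ k ih =>
    rw [pow_succ', mul_smul]
    exact parallelSum_two_nsmul_add_le hv (hw.nsmul _) ih a b

lemma parallelSum_nsmul_le_of_parallelSum_add_le (hv : IsNNForm v) (hw : IsNNForm w)
    (h : ∀ a b, parallelSum v w (a + b) ≤ FQ u a + FQ w b) (n : ℕ) (x : X) :
    parallelSum v (n • w) x ≤ FQ u x := by
  have hn : FLe (n • w) (2 ^ n • w) := fun y => by
    rw [FQ_nsmul, FQ_nsmul]
    exact mul_le_mul_of_nonneg_right (mod_cast n.lt_two_pow_self.le) (FQ_nonneg hw y)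
  calc parallelSum v (n • w) x ≤ parallelSum v (2 ^ n • w) (x + 0) := by
        simpa using parallelSum_mono_right hv (hw.nsmul n) hn x
    _ ≤ FQ u x := by simpa using parallelSum_two_pow_nsmul_add_le hv hw h n x 0

lemma parallelSum_add_le_nsmul (hv : IsNNForm v) (hw : IsNNForm w) {μ : ℝ} (hμ : 0 < μ)
    {n : ℕ} (hn : 1 + μ⁻¹ ≤ n) (a b : X) :
    parallelSum v w (a + b) ≤ parallelSum v (n • w) a + (1 + μ) * FQ w b := by
  suffices ∀ z, parallelSum v w (a + b) - (1 + μ) * FQ w b ≤ FQ v (a - z) + FQ (n • w) z by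
    linarith [show _ ≤ parallelSum v (n • w) a from le_ciInf this]
  intro z
  have hz : (1 + μ⁻¹) * FQ w z ≤ n * FQ w z := mul_le_mul_of_nonneg_right hn (FQ_nonneg hw z)
  have hsplit := FQ_add_le hw hμ b z
  have := parallelSum_le hv hw (a + b) (b + z)
  rw [show a + b - (b + z) = a - z by abel] at this
  rw [FQ_nsmul]
  linarith

lemma parallelSum_add_le_of_forall_nsmul (hv : IsNNForm v) (hw : IsNNForm w)
    (h : ∀ (n : ℕ) x, parallelSum v (n • w) x ≤ FQ u x) (a b : X) :
    parallelSum v w (a + b) ≤ FQ u a + FQ w b := by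
  refine le_of_forall_pos_le_add fun ε hε => ?_
  have hb := FQ_nonneg hw b
  set μ := ε / (FQ w b + 1)
  have hμ : 0 < μ := by positivity
  have hμb : μ * FQ w b ≤ ε := by
    rw [div_mul_eq_mul_div, div_le_iff₀ (by positivity)]
    nlinarith
  obtain ⟨n, hn⟩ := exists_nat_ge (1 + μ⁻¹)
  linarith [parallelSum_add_le_nsmul hv hw hμ hn a b, h n a]

theorem parallelSum_le_parallelSum_iff_forall_nsmul (hu : IsNNForm u) (hv : IsNNForm v)
    (hw : IsNNForm w) :
    (∀ x, parallelSum v w x ≤ parallelSum u w x) ↔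
      ∀ (n : ℕ) x, parallelSum v (n • w) x ≤ FQ u x := by
  rw [parallelSum_le_parallelSum_iff hu hw]
  exact ⟨parallelSum_nsmul_le_of_parallelSum_add_le hv hw,
    parallelSum_add_le_of_forall_nsmul hv hw⟩

lemma bddAbove_range_parallelSum_nsmul (hv : IsNNForm v) (hw : IsNNForm w) (x : X) :
    BddAbove (Set.range fun n : ℕ => parallelSum v (n • w) x) :=
  ⟨FQ v x, by rintro _ ⟨n, rfl⟩; exact parallelSum_le_left hv (hw.nsmul n) x⟩

end

theorem galois_connection_adjunction_general
    {X : Type*} [AddCommGroup X] [Module ℂ X]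
    (u v w p : X →ₗ[ℂ] X →ₗ⋆[ℂ] ℂ)
    (hu : IsNNForm u) (hv : IsNNForm v) (hw : IsNNForm w)
    (hpd : ∀ x : X, FQ p x = ⨆ n : ℕ, ⨅ y : X, (FQ v (x - y) + (n : ℝ) * FQ w y)) :
    (∀ x : X, (⨅ y : X, (FQ v (x - y) + FQ w y)) ≤ ⨅ y : X, (FQ u (x - y) + FQ w y)) ↔
      FLe p u := by
  simp only [← parallelSum_nsmul] at hpd
  change (∀ x, parallelSum v w x ≤ parallelSum u w x) ↔ _
  rw [parallelSum_le_parallelSum_iff_forall_nsmul hu hv hw, forall_comm]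
  simp only [FLe, hpd, ciSup_le_iff (bddAbove_range_parallelSum_nsmul hv hw _)]

theorem galois_connection_adjunction
    {X : Type*} [AddCommGroup X] [Module ℂ X]
    (u v w p : X →ₗ[ℂ] X →ₗ⋆[ℂ] ℂ)
    (hu : IsNNForm u) (hv : IsNNForm v) (hw : IsNNForm w) (hp : IsNNForm p)
    (hpd : ∀ x : X, FQ p x = ⨆ n : ℕ, ⨅ y : X, (FQ v (x - y) + (n : ℝ) * FQ w y)) :
    (∀ x : X, (⨅ y : X, (FQ v (x - y) + FQ w y)) ≤ ⨅ y : X, (FQ u (x - y) + FQ w y)) ↔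
      FLe p u :=
  galois_connection_adjunction_general u v w p hu hv hw hpd
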